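/- (Corollary 1) Suppose for every μ ∈ [μ₀, 1/δ] there is a pair (ς_μ,σ_μ) ∈ S_μ⁺ such that, with x_μ = G_μ(ς_μ,σ_μ)⁻¹(c − σ_μ b), one has ς_μ = ½|Bx_μ|² − λ and h(x_μ) = 1/μ. Then the infimum of P₀(x) over x ∈ X equals the infimum over μ ∈ [μ₀, 1/δ] of P^d_μ(ς_μ,σ_μ). -/

import Mathlib

/-
For fixed `μ`, the total complementary function `Ξ_μ(·, ς, σ)` is a quadratic in `x` with Hessian
`G_μ(ς, σ)`; completing the square shows that for `G_μ(ς, σ)` positive definite its minimum is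
`P^d_μ(ς, σ)`, attained at `x_μ = G_μ⁻¹(c − σb)`. Writing `Ξ_μ = q + μ(ς t − ς²/2) − σ(h − 1/μ)` with
`t = ½|Bx|² − λ`, the Fenchel–Young inequality `ς t − ς²/2 ≤ t²/2` and `σ ≥ 0` give
`Ξ_μ(x, ς, σ) ≤ P_μ(x)` on `X_μ`, with equality when `ς = t(x)` and `h(x) = 1/μ`.
Since `P₀(x) = P_{1/h(x)}(x)` and `h ≤ h(H⁻¹b)`, every primal value dominates the dual value at
`μ = 1/h(x) ∈ [μ₀, 1/δ]`, while every dual value `P^d_μ(ς_μ, σ_μ)` is the primal value at the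
feasible point `x_μ`; hence the two infima coincide.
-/

open Matrix Set Filter

noncomputable section

/-- `q(x) = ½ xᵀQx − cᵀx`. -/
def qfun {n : ℕ} (Q : Matrix (Fin n) (Fin n) ℝ) (c : Fin n → ℝ) (x : Fin n → ℝ) : ℝ :=
  (1/2) * (x ⬝ᵥ (Q *ᵥ x)) - c ⬝ᵥ x

/-- `g(x) = ½ (½|Bx|² − λ)²`. -/
def gfun {n m : ℕ} (B : Matrix (Fin m) (Fin n) ℝ) (lam : ℝ) (x : Fin n → ℝ) : ℝ :=
  (1/2) * ((1/2) * ((B *ᵥ x) ⬝ᵥ (B *ᵥ x)) - lam)^2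

/-- `h(x) = ½ xᵀHx − bᵀx`. -/
def hfun {n : ℕ} (H : Matrix (Fin n) (Fin n) ℝ) (b : Fin n → ℝ) (x : Fin n → ℝ) : ℝ :=
  (1/2) * (x ⬝ᵥ (H *ᵥ x)) - b ⬝ᵥ x

/-- `G_μ(ς,σ) = Q + μς BᵀB − σH`. -/
def Gmu {n m : ℕ} (Q : Matrix (Fin n) (Fin n) ℝ) (B : Matrix (Fin m) (Fin n) ℝ)
    (H : Matrix (Fin n) (Fin n) ℝ) (μ ς σ : ℝ) : Matrix (Fin n) (Fin n) ℝ :=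
  Q + (μ * ς) • (Bᵀ * B) - σ • H

/-- The dual feasible set `S_μ⁺`. -/
def Smu {n m : ℕ} (Q : Matrix (Fin n) (Fin n) ℝ) (B : Matrix (Fin m) (Fin n) ℝ)
    (H : Matrix (Fin n) (Fin n) ℝ) (lam μ : ℝ) : Set (ℝ × ℝ) :=
  {p : ℝ × ℝ | -lam ≤ p.1 ∧ 0 ≤ p.2 ∧ (Gmu Q B H μ p.1 p.2).PosDef}

/-- The canonical dual function `P^d_μ(ς,σ)`. -/
def Pd {n m : ℕ} (Q : Matrix (Fin n) (Fin n) ℝ) (B : Matrix (Fin m) (Fin n) ℝ)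
    (H : Matrix (Fin n) (Fin n) ℝ) (lam : ℝ) (c b : Fin n → ℝ) (μ ς σ : ℝ) : ℝ :=
  -(1/2) * ((c - σ • b) ⬝ᵥ ((Gmu Q B H μ ς σ)⁻¹ *ᵥ (c - σ • b)))
    - μ * lam * ς - (μ/2) * ς^2 + σ/μ

/-- The total complementary function `Ξ_μ(x,ς,σ)`. -/
def Xi {n m : ℕ} (Q : Matrix (Fin n) (Fin n) ℝ) (B : Matrix (Fin m) (Fin n) ℝ)
    (H : Matrix (Fin n) (Fin n) ℝ) (lam : ℝ) (c b : Fin n → ℝ)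
    (μ : ℝ) (x : Fin n → ℝ) (ς σ : ℝ) : ℝ :=
  (1/2) * (x ⬝ᵥ (Gmu Q B H μ ς σ *ᵥ x)) - (c - σ • b) ⬝ᵥ x
    - μ * lam * ς - (μ/2) * ς^2 + σ/μ

section Quadratic

variable {ι : Type*} [Fintype ι] {G : Matrix ι ι ℝ}

lemma Matrix.mulVec_nonsing_inv_mulVec [DecidableEq ι] (hG : IsUnit G.det) (v : ι → ℝ) :
    G *ᵥ (G⁻¹ *ᵥ v) = v := by
  rw [mulVec_mulVec, mul_nonsing_inv _ hG, one_mulVec]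

lemma Matrix.PosSemidef.dotProduct_mulVec_comm (hG : G.PosSemidef) (x y : ι → ℝ) :
    x ⬝ᵥ (G *ᵥ y) = y ⬝ᵥ (G *ᵥ x) := by
  have hsymm : Gᵀ = G := by
    simpa [conjTranspose_eq_transpose_of_trivial] using hG.isHermitian.eq
  rw [dotProduct_mulVec, ← mulVec_transpose, hsymm, dotProduct_comm]

lemma Matrix.PosSemidef.quadratic_le_of_mulVec_eq (hG : G.PosSemidef) {v y : ι → ℝ}
    (hy : G *ᵥ y = v) (x : ι → ℝ) :
    (1/2) * (y ⬝ᵥ (G *ᵥ y)) - v ⬝ᵥ y ≤ (1/2) * (x ⬝ᵥ (G *ᵥ x)) - v ⬝ᵥ x := by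
  have hsq : 0 ≤ (x - y) ⬝ᵥ (G *ᵥ (x - y)) := by
    simpa using hG.dotProduct_mulVec_nonneg (x - y)
  have hcross : v ⬝ᵥ x = y ⬝ᵥ (G *ᵥ x) := by
    rw [← hy, dotProduct_comm, hG.dotProduct_mulVec_comm]
  have hv : v ⬝ᵥ y = y ⬝ᵥ (G *ᵥ y) := by rw [← hy, dotProduct_comm]
  simp only [mulVec_sub, dotProduct_sub, sub_dotProduct, hG.dotProduct_mulVec_comm x y] at hsq
  linarith

end Quadratic

variable {n m : ℕ} (Q : Matrix (Fin n) (Fin n) ℝ) (B : Matrix (Fin m) (Fin n) ℝ)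
  (H : Matrix (Fin n) (Fin n) ℝ) (lam : ℝ) (c b : Fin n → ℝ)

lemma hfun_le_hfun_inv_mulVec (hH : (-H).PosDef) (x : Fin n → ℝ) :
    hfun H b x ≤ hfun H b (H⁻¹ *ᵥ b) := by
  have hunit : IsUnit H := by simpa using hH.isUnit.neg
  have hcrit : -H *ᵥ (H⁻¹ *ᵥ b) = -b := by
    rw [neg_mulVec, mulVec_nonsing_inv_mulVec ((isUnit_iff_isUnit_det H).mp hunit)]
  have hmin := hH.posSemidef.quadratic_le_of_mulVec_eq hcrit x
  simp only [neg_mulVec, dotProduct_neg, neg_dotProduct] at hmin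
  unfold hfun
  linarith

lemma dotProduct_Gmu_mulVec (μ ς σ : ℝ) (x : Fin n → ℝ) :
    x ⬝ᵥ (Gmu Q B H μ ς σ *ᵥ x)
      = x ⬝ᵥ (Q *ᵥ x) + μ * ς * ((B *ᵥ x) ⬝ᵥ (B *ᵥ x)) - σ * (x ⬝ᵥ (H *ᵥ x)) := by
  rw [Gmu, sub_mulVec, add_mulVec, smul_mulVec, smul_mulVec, dotProduct_sub, dotProduct_add,
    dotProduct_smul, dotProduct_smul, ← mulVec_mulVec, dotProduct_mulVec x Bᵀ,
    vecMul_transpose, smul_eq_mul, smul_eq_mul]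

lemma Xi_eq_qfun_add (μ : ℝ) (x : Fin n → ℝ) (ς σ : ℝ) :
    Xi Q B H lam c b μ x ς σ
      = qfun Q c x + μ * (ς * ((1/2) * ((B *ᵥ x) ⬝ᵥ (B *ᵥ x)) - lam) - ς ^ 2 / 2)
        - σ * (hfun H b x - 1/μ) := by
  simp only [Xi, qfun, hfun, dotProduct_Gmu_mulVec, sub_dotProduct, smul_dotProduct, smul_eq_mul]
  ring

lemma Xi_le_qfun_add_mul_gfun {μ σ : ℝ} (hμ : 0 ≤ μ) (hσ : 0 ≤ σ) {x : Fin n → ℝ}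
    (hx : 1/μ ≤ hfun H b x) (ς : ℝ) :
    Xi Q B H lam c b μ x ς σ ≤ qfun Q c x + μ * gfun B lam x := by
  rw [Xi_eq_qfun_add, gfun]
  nlinarith [mul_nonneg hμ (sq_nonneg (ς - ((1/2) * ((B *ᵥ x) ⬝ᵥ (B *ᵥ x)) - lam))),
    mul_nonneg hσ (sub_nonneg.mpr hx)]

lemma Xi_eq_qfun_add_mul_gfun {μ ς : ℝ} {x : Fin n → ℝ}
    (hς : ς = (1/2) * ((B *ᵥ x) ⬝ᵥ (B *ᵥ x)) - lam) (hx : hfun H b x = 1/μ) (σ : ℝ) :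
    Xi Q B H lam c b μ x ς σ = qfun Q c x + μ * gfun B lam x := by
  rw [Xi_eq_qfun_add, gfun, hx, ← hς]
  ring

section Dual

variable {Q B H} {μ ς σ : ℝ} (hG : (Gmu Q B H μ ς σ).PosDef)
include hG

lemma Pd_eq_Xi : Pd Q B H lam c b μ ς σ
    = Xi Q B H lam c b μ ((Gmu Q B H μ ς σ)⁻¹ *ᵥ (c - σ • b)) ς σ := by
  rw [Pd, Xi, mulVec_nonsing_inv_mulVec hG.det_pos.ne'.isUnit, dotProduct_comm _ (c - σ • b)]
  ring

lemma Pd_le_Xi (x : Fin n → ℝ) : Pd Q B H lam c b μ ς σ ≤ Xi Q B H lam c b μ x ς σ := by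
  have hmin := hG.posSemidef.quadratic_le_of_mulVec_eq
    (mulVec_nonsing_inv_mulVec hG.det_pos.ne'.isUnit (c - σ • b)) x
  rw [Pd_eq_Xi lam c b hG, Xi, Xi]
  linarith

end Dual

theorem stmt_16_general {n m : ℕ}
    (Q : Matrix (Fin n) (Fin n) ℝ)
    (B : Matrix (Fin m) (Fin n) ℝ)
    (H : Matrix (Fin n) (Fin n) ℝ) (hHneg : (-H).PosDef)
    (lam : ℝ) (c b : Fin n → ℝ)
    (μ₀ : ℝ) (hμ₀ : μ₀ = 1 / hfun H b (H⁻¹ *ᵥ b))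
    (δ : ℝ) (hδ : 0 < δ) (hδle : δ ≤ hfun H b (H⁻¹ *ᵥ b))
    (ς σ : ℝ → ℝ)
    (hsta : ∀ μ ∈ Icc μ₀ (1/δ), (ς μ, σ μ) ∈ Smu Q B H lam μ ∧
      (let xμ := (Gmu Q B H μ (ς μ) (σ μ))⁻¹ *ᵥ (c - σ μ • b)
       ς μ = (1/2) * ((B *ᵥ xμ) ⬝ᵥ (B *ᵥ xμ)) - lam ∧ hfun H b xμ = 1/μ)) :
    sInf ((fun x => qfun Q c x + gfun B lam x / hfun H b x) ''
        {x : Fin n → ℝ | δ ≤ hfun H b x}) =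
      sInf ((fun μ => Pd Q B H lam c b μ (ς μ) (σ μ)) '' Icc μ₀ (1/δ)) := by
  apply csInf_eq_csInf_of_forall_exists_le
  · rintro _ ⟨x, hx, rfl⟩
    have hx_pos : 0 < hfun H b x := hδ.trans_le hx
    have hμ : 1 / hfun H b x ∈ Icc μ₀ (1/δ) :=
      ⟨hμ₀ ▸ one_div_le_one_div_of_le hx_pos (hfun_le_hfun_inv_mulVec H b hHneg x),
        one_div_le_one_div_of_le hδ hx⟩
    obtain ⟨⟨-, hσ, hG⟩, -⟩ := hsta _ hμ
    refine ⟨_, mem_image_of_mem _ hμ, ?_⟩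
    calc Pd Q B H lam c b _ _ _ ≤ Xi Q B H lam c b _ x _ _ := Pd_le_Xi lam c b hG x
      _ ≤ qfun Q c x + 1 / hfun H b x * gfun B lam x :=
        Xi_le_qfun_add_mul_gfun Q B H lam c b (by positivity) hσ (one_div_one_div _).le _
      _ = qfun Q c x + gfun B lam x / hfun H b x := by rw [one_div_mul_eq_div]
  · rintro _ ⟨μ, hμ, rfl⟩
    obtain ⟨⟨-, -, hG⟩, hς, hh⟩ := hsta μ hμ
    have hμ_pos : 0 < μ := (hμ₀ ▸ one_div_pos.mpr (hδ.trans_le hδle)).trans_le hμ.1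
    have hfeas : δ ≤ hfun H b _ := hh ▸ (le_one_div hδ hμ_pos).mpr hμ.2
    refine ⟨_, mem_image_of_mem _ hfeas, ge_of_eq ?_⟩
    calc Pd Q B H lam c b μ (ς μ) (σ μ) = Xi Q B H lam c b μ _ (ς μ) (σ μ) := Pd_eq_Xi lam c b hG
      _ = qfun Q c _ + μ * gfun B lam _ := Xi_eq_qfun_add_mul_gfun Q B H lam c b hς hh _
      _ = _ := by rw [hh, div_div_eq_mul_div, div_one, mul_comm]

/-- Corollary 1: if for every `μ ∈ [μ₀, 1/δ]` there is a stationary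
dual pair `(ς_μ, σ_μ) ∈ S_μ⁺`, then
`inf_{x ∈ X} P₀(x) = inf_{μ ∈ [μ₀,1/δ]} P^d_μ(ς_μ, σ_μ)`. -/
theorem stmt_16 {n m : ℕ} (hn : 0 < n) (hm : 0 < m)
    (Q : Matrix (Fin n) (Fin n) ℝ) (hQsymm : Q.IsSymm)
    (B : Matrix (Fin m) (Fin n) ℝ)
    (H : Matrix (Fin n) (Fin n) ℝ) (hHsymm : H.IsSymm) (hHneg : (-H).PosDef)
    (lam : ℝ) (hlam : 0 ≤ lam) (c b : Fin n → ℝ)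
    (hpos : 0 < hfun H b (H⁻¹ *ᵥ b))
    (μ₀ : ℝ) (hμ₀ : μ₀ = 1 / hfun H b (H⁻¹ *ᵥ b))
    (δ : ℝ) (hδ : 0 < δ) (hδle : δ ≤ hfun H b (H⁻¹ *ᵥ b))
    (ς σ : ℝ → ℝ)
    (hsta : ∀ μ ∈ Icc μ₀ (1/δ), (ς μ, σ μ) ∈ Smu Q B H lam μ ∧
      (let xμ := (Gmu Q B H μ (ς μ) (σ μ))⁻¹ *ᵥ (c - σ μ • b)
       ς μ = (1/2) * ((B *ᵥ xμ) ⬝ᵥ (B *ᵥ xμ)) - lam ∧ hfun H b xμ = 1/μ)) :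
    sInf ((fun x => qfun Q c x + gfun B lam x / hfun H b x) ''
        {x : Fin n → ℝ | δ ≤ hfun H b x}) =
      sInf ((fun μ => Pd Q B H lam c b μ (ς μ) (σ μ)) '' Icc μ₀ (1/δ)) :=
  stmt_16_general Q B H hHneg lam c b μ₀ hμ₀ δ hδ hδle ς σ hsta
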